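/- Let k ≥ 2 and let M be a {0,1}-matrix with k columns that is a minimal linear dependency with exactly 2k ones and exactly k nonzero rows. Then the nonzero rows of M form the edge-vertex incidence matrix of a tree on k vertices together with one additional edge (possibly a multi-edge) joining two vertices whose distance in the tree is odd. Conversely, every such tree-with-added-odd-edge incidence matrix is a minimal linear dependency with 2k ones and k nonzero rows. -/

import Mathlib

/-!
A kernel vector `x` without zero entries rules out rows with a single one, so `2k` ones on `k`
nonzero rows force every nonzero row to be the incidence row of an edge `{i, j}`, and then
`x i = -x j`. The graph of these edges is connected: otherwise `x` restricted to one component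
would be a kernel vector independent of `x`, against nullity one. A spanning tree accounts for
`k - 1` of the `k` rows; the remaining row joins vertices `a, b` with `x a = -x b`, and since `x`
alternates along the tree, `dist a b` is odd.

Conversely, the tree rows alone have the one-dimensional kernel spanned by
`v ↦ (-1) ^ dist a v`, and the extra row annihilates it exactly because `dist a b` is odd.
-/

/-- Row `r` of `M` has ones exactly at columns `i` and `j` (the incidence row of edge `{i,j}`). -/
def IsEdgeRow {m k : ℕ} (M : Matrix (Fin m) (Fin k) ℝ) (r : Fin m) (i j : Fin k) : Prop :=
  ∀ l, M r l = if l = i ∨ l = j then 1 else 0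

open SimpleGraph Finset Matrix

namespace SimpleGraph

variable {V R : Type*} {G H : SimpleGraph V} [Ring R] {y : V → R}

def IsSignAlternating (G : SimpleGraph V) (y : V → R) : Prop :=
  ∀ a b, G.Adj a b → y a + y b = 0

lemma IsSignAlternating.mono (hy : H.IsSignAlternating y) (hGH : G ≤ H) : G.IsSignAlternating y :=
  fun a b h => hy a b (hGH h)

lemma IsSignAlternating.apply_eq_neg_one_pow_length_mul (hy : G.IsSignAlternating y) {u v : V}
    (w : G.Walk u v) : y v = (-1) ^ w.length * y u := by
  induction w with
  | nil => simp
  | cons h p ih =>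
    rw [Walk.length_cons, ih, eq_neg_of_add_eq_zero_right (hy _ _ h), pow_succ, mul_assoc,
      neg_one_mul]

lemma IsSignAlternating.apply_eq_neg_one_pow_dist_mul (hy : G.IsSignAlternating y)
    (hG : G.Connected) (u v : V) : y v = (-1) ^ G.dist u v * y u := by
  obtain ⟨w, hw⟩ := hG.exists_walk_length_eq_dist u v
  rw [← hw, hy.apply_eq_neg_one_pow_length_mul w]

lemma IsSignAlternating.odd_dist [NoZeroDivisors R] [CharZero R] (hy : G.IsSignAlternating y)
    (hG : G.Connected) {a b : V} (hab : y a + y b = 0) (ha : y a ≠ 0) : Odd (G.dist a b) := by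
  rw [← Nat.not_even_iff_odd]
  intro heven
  rw [hy.apply_eq_neg_one_pow_dist_mul hG a b, heven.neg_one_pow, one_mul, add_self_eq_zero] at hab
  exact ha hab

lemma IsTree.isSignAlternating_neg_one_pow_dist (hG : G.IsTree) (u : V) :
    G.IsSignAlternating fun v => (-1 : R) ^ G.dist u v := by
  intro a b h
  rcases hG.dist_eq_dist_add_one_of_adj u h with h' | h' <;> simp [h', pow_succ]

end SimpleGraph

lemma Matrix.rank_eq_card_sub_one_iff {K ι κ : Type*} [Field K] [Fintype κ]
    (M : Matrix ι κ K) {x : κ → K} (hx : M *ᵥ x = 0) (hx0 : x ≠ 0) :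
    M.rank = Fintype.card κ - 1 ↔ ∀ y, M *ᵥ y = 0 → ∃ t : K, y = t • x := by
  have hxker : x ∈ LinearMap.ker M.mulVecLin := hx
  have hsum := LinearMap.finrank_range_add_finrank_ker M.mulVecLin
  rw [Module.finrank_fintype_fun_eq_card] at hsum
  have hpos : 0 < Module.finrank K (LinearMap.ker M.mulVecLin) :=
    Module.finrank_pos_iff_exists_ne_zero.2 ⟨⟨x, hxker⟩, by simpa using hx0⟩
  have hnullity :
      M.rank = Fintype.card κ - 1 ↔ Module.finrank K (LinearMap.ker M.mulVecLin) = 1 := by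
    rw [rank]; omega
  rw [hnullity, finrank_eq_one_iff_of_nonzero' (⟨x, hxker⟩ : LinearMap.ker M.mulVecLin)
    (by simpa using hx0)]
  constructor
  · intro h y hy
    obtain ⟨t, ht⟩ := h ⟨y, hy⟩
    exact ⟨t, congrArg Subtype.val ht.symm⟩
  · rintro h ⟨y, hy⟩
    obtain ⟨t, rfl⟩ := h y hy
    exact ⟨t, rfl⟩

theorem Finset.exists_forall_existsUnique_of_card_eq_add_one {α β : Type*} [DecidableEq α]
    {r : α → β → Prop} (hr : ∀ a b b', r a b → r a b' → b = b') {s : Finset α} {t : Finset β}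
    (ht : ∀ b ∈ t, ∃ a ∈ s, r a b) (hcard : #s = #t + 1) :
    ∃ a₀ ∈ s, (∀ b ∈ t, ∃! a, a ∈ s.erase a₀ ∧ r a b) ∧ ∀ a ∈ s.erase a₀, ∃ b ∈ t, r a b := by
  obtain ⟨a, -⟩ : s.Nonempty := card_pos.1 (by omega)
  have : Nonempty α := ⟨a⟩
  choose! f hfs hfr using ht
  have hinj : Set.InjOn f t := fun b hb b' hb' h => hr _ _ _ (hfr b hb) (h ▸ hfr b' hb')
  have hsub : t.image f ⊆ s := image_subset_iff.2 hfs
  obtain ⟨a₀, ha₀⟩ : ∃ a₀, s \ t.image f = {a₀} := card_eq_one.1 <| by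
    rw [card_sdiff_of_subset hsub, card_image_of_injOn hinj]; omega
  have ha₀s : a₀ ∈ s \ t.image f := ha₀ ▸ mem_singleton_self a₀
  have herase : s.erase a₀ = t.image f := by
    ext a
    constructor
    · intro ha
      by_contra hna
      exact ne_of_mem_erase ha (by simpa [ha₀] using mem_sdiff.2 ⟨mem_of_mem_erase ha, hna⟩)
    · intro ha
      exact mem_erase.2 ⟨fun h => (mem_sdiff.1 ha₀s).2 (h ▸ ha), hsub ha⟩
  refine ⟨a₀, (mem_sdiff.1 ha₀s).1,
    fun b hb => ⟨f b, ⟨herase ▸ mem_image_of_mem f hb, hfr b hb⟩, ?_⟩, ?_⟩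
  · rintro _ ⟨ha, hab⟩
    rw [herase] at ha
    obtain ⟨b', hb', rfl⟩ := mem_image.1 ha
    rw [hr _ _ _ hab (hfr b' hb')]
  · intro a ha
    rw [herase] at ha
    obtain ⟨b, hb, rfl⟩ := mem_image.1 ha
    exact ⟨b, hb, hfr b hb⟩

section IncidenceMatrix

variable {m k : ℕ} {M : Matrix (Fin m) (Fin k) ℝ} {r : Fin m} {i j : Fin k}

open Classical in
noncomputable def rowOnes (M : Matrix (Fin m) (Fin k) ℝ) (r : Fin m) : Finset (Fin k) :=
  {l | M r l = 1}

open Classical in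
noncomputable def nonzeroRows (M : Matrix (Fin m) (Fin k) ℝ) : Finset (Fin m) :=
  {r | ∃ l, M r l ≠ 0}

def IsIncidenceRow (M : Matrix (Fin m) (Fin k) ℝ) (r : Fin m) (e : Sym2 (Fin k)) : Prop :=
  ∀ l, M r l = if l ∈ e then 1 else 0

def IsMultigraphIncidence (M : Matrix (Fin m) (Fin k) ℝ) : Prop :=
  ∀ r, (∀ l, M r l = 0) ∨ ∃ i j, i ≠ j ∧ IsEdgeRow M r i j

lemma isIncidenceRow_mk : IsIncidenceRow M r s(i, j) ↔ IsEdgeRow M r i j := by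
  simp [IsIncidenceRow, IsEdgeRow]

lemma IsIncidenceRow.unique {e e' : Sym2 (Fin k)} (h : IsIncidenceRow M r e)
    (h' : IsIncidenceRow M r e') : e = e' :=
  Sym2.ext fun l => by
    have := (h l).symm.trans (h' l)
    split_ifs at this <;> simp_all

lemma IsEdgeRow.symm (h : IsEdgeRow M r i j) : IsEdgeRow M r j i :=
  fun l => by simp only [h l, or_comm]

lemma IsEdgeRow.mem_nonzeroRows (h : IsEdgeRow M r i j) : r ∈ nonzeroRows M := by
  simp only [nonzeroRows, mem_filter, mem_univ, true_and]
  exact ⟨i, by simp [h i]⟩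

lemma IsEdgeRow.rowOnes_eq (h : IsEdgeRow M r i j) : rowOnes M r = {i, j} := by
  ext l
  simp [rowOnes, h l, or_iff_not_imp_left]

lemma mulVec_apply_eq_sum_rowOnes (h01 : ∀ l, M r l = 0 ∨ M r l = 1) (y : Fin k → ℝ) :
    (M *ᵥ y) r = ∑ l ∈ rowOnes M r, y l := by
  rw [rowOnes, sum_filter, mulVec, dotProduct]
  refine sum_congr rfl fun l _ => ?_
  rcases h01 l with h | h <;> simp [h]

lemma IsEdgeRow.mulVec_apply (hij : i ≠ j) (h : IsEdgeRow M r i j) (y : Fin k → ℝ) :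
    (M *ᵥ y) r = y i + y j := by
  rw [mulVec_apply_eq_sum_rowOnes (fun l => by rw [h l]; split_ifs <;> simp) y, h.rowOnes_eq,
    sum_pair hij]

lemma mulVec_apply_of_row_eq_zero (h : ∀ l, M r l = 0) (y : Fin k → ℝ) : (M *ᵥ y) r = 0 := by
  simp [mulVec, dotProduct, h]

lemma ncard_nonzeroRows : Set.ncard {r | ∃ l, M r l ≠ 0} = #(nonzeroRows M) := by
  rw [nonzeroRows, ← Set.ncard_coe_finset, coe_filter]
  simp

lemma ncard_ones_eq_sum_card_rowOnes :
    Set.ncard {p : Fin m × Fin k | M p.1 p.2 = 1} = ∑ r ∈ nonzeroRows M, #(rowOnes M r) := by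
  have hzero : ∀ r ∉ nonzeroRows M, #(rowOnes M r) = 0 := fun r hr => by
    simp_all [nonzeroRows, rowOnes]
  rw [sum_subset (subset_univ _) fun r _ => hzero r, Set.ncard_eq_toFinset_card',
    Set.toFinset_ofPred, card_filter, Fintype.sum_prod_type]
  simp only [rowOnes, card_filter]

lemma IsMultigraphIncidence.ncard_ones (hM : IsMultigraphIncidence M) :
    Set.ncard {p : Fin m × Fin k | M p.1 p.2 = 1} = 2 * #(nonzeroRows M) := by
  rw [ncard_ones_eq_sum_card_rowOnes, mul_comm, ← smul_eq_mul, ← sum_const]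
  refine sum_congr rfl fun r hr => ?_
  obtain ⟨l, hl⟩ : ∃ l, M r l ≠ 0 := by simpa [nonzeroRows] using hr
  obtain ⟨i, j, hij, h⟩ := (hM r).resolve_left fun h => hl (h l)
  rw [h.rowOnes_eq, card_pair hij]

lemma two_le_card_rowOnes (h01 : ∀ i j, M i j = 0 ∨ M i j = 1) {x : Fin k → ℝ}
    (hx : M *ᵥ x = 0) (hx0 : ∀ j, x j ≠ 0) (hr : r ∈ nonzeroRows M) : 2 ≤ #(rowOnes M r) := by
  have hsum : ∑ l ∈ rowOnes M r, x l = 0 := by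
    rw [← mulVec_apply_eq_sum_rowOnes (h01 r), hx, Pi.zero_apply]
  obtain ⟨l, hl⟩ : ∃ l, M r l ≠ 0 := by simpa [nonzeroRows] using hr
  have hne : (rowOnes M r).Nonempty := ⟨l, by simpa [rowOnes] using (h01 r l).resolve_left hl⟩
  by_contra! hlt
  obtain ⟨l₀, hl₀⟩ := card_eq_one.1 (show #(rowOnes M r) = 1 by have := hne.card_pos; omega)
  rw [hl₀, sum_singleton] at hsum
  exact hx0 l₀ hsum

lemma isMultigraphIncidence_of_ncard_ones (h01 : ∀ i j, M i j = 0 ∨ M i j = 1) {x : Fin k → ℝ}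
    (hx : M *ᵥ x = 0) (hx0 : ∀ j, x j ≠ 0)
    (hones : Set.ncard {p : Fin m × Fin k | M p.1 p.2 = 1} = 2 * #(nonzeroRows M)) :
    IsMultigraphIncidence M := by
  intro r
  by_cases hr : r ∈ nonzeroRows M
  · right
    have hcard : #(rowOnes M r) = 2 := by
      refine ((sum_eq_sum_iff_of_le (f := fun _ => 2) fun r hr =>
        two_le_card_rowOnes h01 hx hx0 hr).1 ?_ r hr).symm
      rw [sum_const, smul_eq_mul, ← ncard_ones_eq_sum_card_rowOnes, hones, mul_comm]
    obtain ⟨i, j, hij, hs⟩ := card_eq_two.1 hcard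
    have hone : ∀ l, M r l = 1 ↔ l = i ∨ l = j := fun l => by
      simpa [rowOnes] using congrArg (l ∈ ·) hs
    refine ⟨i, j, hij, fun l => ?_⟩
    split_ifs with hl
    · exact (hone l).2 hl
    · exact (h01 r l).resolve_right (mt (hone l).1 hl)
  · left
    simpa [nonzeroRows] using hr

def edgeRowGraph (M : Matrix (Fin m) (Fin k) ℝ) : SimpleGraph (Fin k) where
  Adj i j := i ≠ j ∧ ∃ r, IsEdgeRow M r i j
  symm := ⟨fun _ _ h => ⟨h.1.symm, h.2.imp fun _ => IsEdgeRow.symm⟩⟩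
  loopless := ⟨fun _ h => h.1 rfl⟩

lemma edgeRowGraph_adj : (edgeRowGraph M).Adj i j ↔ i ≠ j ∧ ∃ r, IsEdgeRow M r i j := Iff.rfl

lemma isSignAlternating_edgeRowGraph {x : Fin k → ℝ} (hx : M *ᵥ x = 0) :
    (edgeRowGraph M).IsSignAlternating x := by
  intro i j hadj
  obtain ⟨hij, r, hr⟩ := edgeRowGraph_adj.1 hadj
  rw [← hr.mulVec_apply hij, hx, Pi.zero_apply]

lemma IsMultigraphIncidence.connected_edgeRowGraph [Nonempty (Fin k)]
    (hM : IsMultigraphIncidence M) {x : Fin k → ℝ} (hx : M *ᵥ x = 0) (hx0 : ∀ j, x j ≠ 0)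
    (hker : ∀ y, M *ᵥ y = 0 → ∃ t : ℝ, y = t • x) : (edgeRowGraph M).Connected := by
  classical
  refine ⟨fun u v => ?_⟩
  by_contra huv
  -- restricting `x` to the component of `u` gives a kernel vector that is not a multiple of `x`
  set y : Fin k → ℝ := fun l => if (edgeRowGraph M).Reachable u l then x l else 0
  have hy : M *ᵥ y = 0 := by
    funext r
    rcases hM r with hr | ⟨i, j, hij, hr⟩
    · exact mulVec_apply_of_row_eq_zero hr y
    have hadj : (edgeRowGraph M).Adj i j := edgeRowGraph_adj.2 ⟨hij, r, hr⟩
    rw [hr.mulVec_apply hij, Pi.zero_apply]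
    by_cases hi : (edgeRowGraph M).Reachable u i
    · simp [y, hi, hi.trans hadj.reachable, isSignAlternating_edgeRowGraph hx i j hadj]
    · have hj : ¬(edgeRowGraph M).Reachable u j := fun h => hi (h.trans hadj.symm.reachable)
      simp [y, hi, hj]
  obtain ⟨t, ht⟩ := hker y hy
  have hu : x u = t * x u := by simpa [y] using congrFun ht u
  have hv : t * x v = 0 := by simpa [y, huv] using (congrFun ht v).symm
  rw [(mul_eq_zero.1 hv).resolve_right (hx0 v), zero_mul] at hu
  exact hx0 u hu

def IsMinimalDependency (M : Matrix (Fin m) (Fin k) ℝ) : Prop :=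
  M.rank = k - 1 ∧ ∃ x : Fin k → ℝ, M *ᵥ x = 0 ∧ ∀ j, x j ≠ 0

def IsTreeWithOddEdge (M : Matrix (Fin m) (Fin k) ℝ) (T : SimpleGraph (Fin k)) (a b : Fin k)
    (r₀ : Fin m) : Prop :=
  T.IsTree ∧ Odd (T.dist a b) ∧ IsEdgeRow M r₀ a b ∧
    (∀ i j, T.Adj i j → ∃! r, r ≠ r₀ ∧ IsEdgeRow M r i j) ∧
    (∀ r, r ≠ r₀ → (∀ l, M r l = 0) ∨ ∃ i j, T.Adj i j ∧ IsEdgeRow M r i j)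

lemma exists_isTreeWithOddEdge (hk : 0 < k) (h01 : ∀ i j, M i j = 0 ∨ M i j = 1)
    (hM : IsMinimalDependency M)
    (hones : Set.ncard {p : Fin m × Fin k | M p.1 p.2 = 1} = 2 * k)
    (hrows : Set.ncard {r : Fin m | ∃ l, M r l ≠ 0} = k) :
    ∃ T a b r₀, IsTreeWithOddEdge M T a b r₀ := by
  classical
  have : Nonempty (Fin k) := ⟨⟨0, hk⟩⟩
  obtain ⟨hrank, x, hx, hx0⟩ := hM
  rw [ncard_nonzeroRows] at hrows
  have hker := (M.rank_eq_card_sub_one_iff hx fun h => hx0 ⟨0, hk⟩ (congrFun h _)).1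
    (by rwa [Fintype.card_fin])
  have hinc : IsMultigraphIncidence M :=
    isMultigraphIncidence_of_ncard_ones h01 hx hx0 (by rw [hones, hrows])
  obtain ⟨T, hTH, hT⟩ := (hinc.connected_edgeRowGraph hx hx0 hker).exists_isTree_le
  have hTrows : ∀ e ∈ T.edgeFinset, ∃ r ∈ nonzeroRows M, IsIncidenceRow M r e := by
    intro e he
    induction e using Sym2.ind with | _ i j =>
    obtain ⟨-, r, hr⟩ := edgeRowGraph_adj.1 (hTH (mem_edgeFinset.1 he))
    exact ⟨r, hr.mem_nonzeroRows, isIncidenceRow_mk.2 hr⟩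
  obtain ⟨r₀, hr₀, huniq, hcover⟩ := exists_forall_existsUnique_of_card_eq_add_one
    (r := IsIncidenceRow M) (fun _ _ _ => IsIncidenceRow.unique) hTrows
    (by rw [hrows, hT.card_edgeFinset, Fintype.card_fin])
  obtain ⟨a, b, hab, hr₀ab⟩ := (hinc r₀).resolve_left fun h => by
    simp [nonzeroRows, h] at hr₀
  refine ⟨T, a, b, r₀, hT, ?_, hr₀ab, fun i j hij => ?_, fun r hr => ?_⟩
  · refine ((isSignAlternating_edgeRowGraph hx).mono hTH).odd_dist hT.connected ?_ (hx0 a)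
    rw [← hr₀ab.mulVec_apply hab, hx, Pi.zero_apply]
  · obtain ⟨r, ⟨hr, hre⟩, hu⟩ := huniq s(i, j) (mem_edgeFinset.2 hij)
    refine ⟨r, ⟨ne_of_mem_erase hr, isIncidenceRow_mk.1 hre⟩, fun r' ⟨hne, hr'⟩ => ?_⟩
    exact hu r' ⟨mem_erase.2 ⟨hne, hr'.mem_nonzeroRows⟩, isIncidenceRow_mk.2 hr'⟩
  · by_cases hrz : r ∈ nonzeroRows M
    · obtain ⟨e, he, hre⟩ := hcover r (mem_erase.2 ⟨hr, hrz⟩)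
      induction e using Sym2.ind with | _ i j =>
      exact Or.inr ⟨i, j, mem_edgeFinset.1 he, isIncidenceRow_mk.1 hre⟩
    · left
      simpa [nonzeroRows] using hrz

section IsTreeWithOddEdge

variable {T : SimpleGraph (Fin k)} {a b : Fin k} {r₀ : Fin m}

lemma IsTreeWithOddEdge.ne (h : IsTreeWithOddEdge M T a b r₀) : a ≠ b := by
  rintro rfl
  simpa using h.2.1

lemma IsTreeWithOddEdge.isMultigraphIncidence (h : IsTreeWithOddEdge M T a b r₀) :
    IsMultigraphIncidence M := by
  intro r
  by_cases hr : r = r₀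
  · exact Or.inr ⟨a, b, h.ne, hr ▸ h.2.2.1⟩
  · exact (h.2.2.2.2 r hr).imp_right fun ⟨i, j, hij, hrij⟩ => ⟨i, j, hij.ne, hrij⟩

lemma IsTreeWithOddEdge.isMinimalDependency (h : IsTreeWithOddEdge M T a b r₀) :
    IsMinimalDependency M := by
  have hab := h.ne
  obtain ⟨hT, hodd, hr₀, huniq, hrest⟩ := h
  set x : Fin k → ℝ := fun v => (-1) ^ T.dist a v
  have hxT : T.IsSignAlternating x := hT.isSignAlternating_neg_one_pow_dist a
  have hx : M *ᵥ x = 0 := by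
    funext r
    by_cases hr : r = r₀
    · subst hr
      rw [hr₀.mulVec_apply hab]
      simp [x, hodd.neg_one_pow]
    · rcases hrest r hr with hz | ⟨i, j, hij, hrij⟩
      · exact mulVec_apply_of_row_eq_zero hz x
      · rw [hrij.mulVec_apply hij.ne]
        exact hxT i j hij
  have hker : ∀ y, M *ᵥ y = 0 → ∃ t : ℝ, y = t • x := by
    intro y hy
    have hyT : T.IsSignAlternating y := fun i j hij => by
      obtain ⟨r, ⟨-, hr⟩, -⟩ := huniq i j hij
      rw [← hr.mulVec_apply hij.ne, hy, Pi.zero_apply]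
    refine ⟨y a, funext fun v => ?_⟩
    rw [hyT.apply_eq_neg_one_pow_dist_mul hT.connected a v, Pi.smul_apply, smul_eq_mul, mul_comm]
  have hx0 : x ≠ 0 := fun h => by simpa [x] using congrFun h a
  refine ⟨?_, x, hx, fun j => by simp [x]⟩
  simpa using (M.rank_eq_card_sub_one_iff hx hx0).2 hker

lemma IsTreeWithOddEdge.card_nonzeroRows (h : IsTreeWithOddEdge M T a b r₀) :
    #(nonzeroRows M) = k := by
  classical
  obtain ⟨hT, -, hr₀, huniq, hrest⟩ := h
  have hcard : #((nonzeroRows M).erase r₀) = #T.edgeFinset := by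
    refine le_antisymm (card_le_card_of_forall_subsingleton (IsIncidenceRow M) ?_ ?_)
      (card_le_card_of_forall_subsingleton' (IsIncidenceRow M) ?_ ?_)
    · intro r hr
      obtain ⟨hne, hrz⟩ := mem_erase.1 hr
      obtain ⟨l, hl⟩ : ∃ l, M r l ≠ 0 := by simpa [nonzeroRows] using hrz
      obtain ⟨i, j, hij, hrij⟩ := (hrest r hne).resolve_left fun h => hl (h l)
      exact ⟨s(i, j), mem_edgeFinset.2 hij, isIncidenceRow_mk.2 hrij⟩
    · intro e he
      induction e using Sym2.ind with | _ i j =>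
      rintro r₁ ⟨hr₁, h₁⟩ r₂ ⟨hr₂, h₂⟩
      exact (huniq i j (mem_edgeFinset.1 he)).unique ⟨ne_of_mem_erase hr₁, isIncidenceRow_mk.1 h₁⟩
        ⟨ne_of_mem_erase hr₂, isIncidenceRow_mk.1 h₂⟩
    · intro e he
      induction e using Sym2.ind with | _ i j =>
      obtain ⟨r, ⟨hne, hr⟩, -⟩ := huniq i j (mem_edgeFinset.1 he)
      exact ⟨r, mem_erase.2 ⟨hne, hr.mem_nonzeroRows⟩, isIncidenceRow_mk.2 hr⟩
    · rintro r - e₁ ⟨-, h₁⟩ e₂ ⟨-, h₂⟩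
      exact h₁.unique h₂
  rw [← card_erase_add_one hr₀.mem_nonzeroRows, hcard, hT.card_edgeFinset, Fintype.card_fin]

end IsTreeWithOddEdge

end IncidenceMatrix

/-- A {0,1}-matrix with `k ≥ 2` columns is a minimal linear dependency with exactly `2k` ones
and exactly `k` nonzero rows if and only if its nonzero rows form the edge-vertex incidence
matrix of a tree on `k` vertices together with one additional edge (possibly a multi-edge)
joining two vertices at odd distance in the tree. -/
theorem stmt18 {m k : ℕ} (hk : 2 ≤ k) (M : Matrix (Fin m) (Fin k) ℝ)
    (h01 : ∀ i j, M i j = 0 ∨ M i j = 1) :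
    ((M.rank = k - 1 ∧ ∃ x : Fin k → ℝ, M.mulVec x = 0 ∧ ∀ j, x j ≠ 0) ∧
      Set.ncard {p : Fin m × Fin k | M p.1 p.2 = 1} = 2 * k ∧
      Set.ncard {r : Fin m | ∃ l, M r l ≠ 0} = k)
    ↔ ∃ (G : SimpleGraph (Fin k)) (a b : Fin k) (r0 : Fin m),
        G.IsTree ∧ Odd (G.dist a b) ∧
        IsEdgeRow M r0 a b ∧
        (∀ i j, G.Adj i j → ∃! r, r ≠ r0 ∧ IsEdgeRow M r i j) ∧
        (∀ r, r ≠ r0 → (∀ l, M r l = 0) ∨ ∃ i j, G.Adj i j ∧ IsEdgeRow M r i j) := by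
  constructor
  · rintro ⟨hM, hones, hrows⟩
    exact exists_isTreeWithOddEdge (by omega) h01 hM hones hrows
  · rintro ⟨T, a, b, r₀, h⟩
    replace h : IsTreeWithOddEdge M T a b r₀ := h
    refine ⟨h.isMinimalDependency, ?_, ?_⟩
    · rw [h.isMultigraphIncidence.ncard_ones, h.card_nonzeroRows]
    · rw [ncard_nonzeroRows, h.card_nonzeroRows]
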